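/- Let 𝒳 and 𝒴 be nonempty finite sets, p_train and p_test probability distributions on 𝒳 with p_train(x) > 0 and p_test(x) > 0 for every x, and p(y|x) a conditional label distribution. Let V_g and V_o be disjoint finite index sets of views; for each view v there is a finite set 𝒳_v, a projection π_v : 𝒳 → 𝒳_v, a feature map φ_v : 𝒳_v × 𝒴 → ℝ^{d_v}, and a parameter θ_v ∈ ℝ^{d_v}; for a distribution p on 𝒳 write p(x_v) = ∑_{x : π_v(x) = x_v} p(x) for its view-v marginal, and assume p_train(π_v x) > 0 and p_test(π_v x) > 0 for all x and all v. For v ∈ V_g set r_v(x) = (p_test(x)/p_train(x))·(p_train(π_v x)/p_test(π_v x)) (the ratio p_test(x_{−v}|x_v)/p_train(x_{−v}|x_v)). Define P̂_θ(y|x) ∝ exp(∑_{v∈V_g} (p_train(π_v x)/p_test(π_v x)) θ_v·φ_v(π_v x, y) + (p_train(x)/p_test(x)) ∑_{v'∈V_o} θ_{v'}·φ_{v'}(π_{v'} x, y)), normalized over y ∈ 𝒴. If P̂_θ satisfies the constraints ∑_{x,y} p_train(x) r_v(x) P̂_θ(y|x) φ_v(π_v x, y) = ∑_{x,y} p_train(x)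 p(y|x) r_v(x) φ_v(π_v x, y) for every v ∈ V_g and ∑_{x,y} p_train(x) P̂_θ(y|x) φ_{v'}(π_{v'} x, y) = ∑_{x,y} p_train(x) p(y|x) φ_{v'}(π_{v'} x, y) for every v' ∈ V_o, then for every conditional label distribution Q satisfying the same constraints, ∑_x p_test(x) ∑_y Q(y|x)(−log Q(y|x)) ≤ ∑_x p_test(x) ∑_y P̂_θ(y|x)(−log P̂_θ(y|x)). That is, the robust multiview covariate shift classifier under logloss has the stated parametric form, with view-specific density ratios p_train(x_v)/p_test(x_v) on generalized views and joint density ratios p_train(x)/p_test(x) on non-generalized views. -/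

import Mathlib

/-!
On each fibre `x`, `P̂_θ(·|x)` is the softmax of an energy `f(x, ·)`, so the cross entropy of any
`Q(·|x)` against it is `log Z(x) - E_Q[f(x, ·)]`. The energy is chosen so that
`p_test(x) f(x, y)` is a `θ`-combination of exactly the weighted features appearing in the
constraints (the density ratios cancel against `p_test`), hence the `p_test`-average of
`E_Q[f]` is the same for every `Q` satisfying the constraints. Gibbs' inequality
(entropy ≤ cross entropy) then bounds the entropy of `Q` by that of `P̂_θ`.
-/

open Finset Real

section Entropy

variable {Y : Type*} [Fintype Y]

theorem mul_neg_log_sub_mul_neg_log_le {p q : ℝ} (hq : 0 ≤ q) (hp : 0 < p) :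
    q * -log q - q * -log p ≤ p - q := by
  rcases hq.eq_or_lt with rfl | hq
  · simpa using hp.le
  · have hlog := mul_le_mul_of_nonneg_left (log_le_sub_one_of_pos (div_pos hp hq)) hq.le
    rw [log_div hp.ne' hq.ne'] at hlog
    have : q * (p / q - 1) = p - q := by field_simp
    linarith

/-- Gibbs' inequality. -/
theorem sum_mul_neg_log_le_sum_mul_neg_log {p q : Y → ℝ} (hq : ∀ y, 0 ≤ q y)
    (hp : ∀ y, 0 < p y) (hsum : ∑ y, p y ≤ ∑ y, q y) :
    ∑ y, q y * -log (q y) ≤ ∑ y, q y * -log (p y) := by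
  have := sum_le_sum fun y (_ : y ∈ univ) => mul_neg_log_sub_mul_neg_log_le (hq y) (hp y)
  rw [sum_sub_distrib, sum_sub_distrib] at this
  linarith

noncomputable def softmax (f : Y → ℝ) (y : Y) : ℝ :=
  exp (f y) / ∑ y', exp (f y')

variable [Nonempty Y]

theorem sum_exp_pos (f : Y → ℝ) : 0 < ∑ y, exp (f y) :=
  sum_pos (fun y _ => exp_pos (f y)) univ_nonempty

theorem softmax_pos (f : Y → ℝ) (y : Y) : 0 < softmax f y :=
  div_pos (exp_pos _) (sum_exp_pos f)

theorem sum_softmax (f : Y → ℝ) : ∑ y, softmax f y = 1 := by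
  simp only [softmax]
  rw [← sum_div, div_self (sum_exp_pos f).ne']

theorem neg_log_softmax (f : Y → ℝ) (y : Y) :
    -log (softmax f y) = log (∑ y', exp (f y')) - f y := by
  rw [softmax, log_div (exp_ne_zero _) (sum_exp_pos f).ne', log_exp]
  ring

theorem sum_mul_neg_log_softmax (f : Y → ℝ) {q : Y → ℝ} (hq : ∑ y, q y = 1) :
    ∑ y, q y * -log (softmax f y) = log (∑ y, exp (f y)) - ∑ y, q y * f y := by
  simp only [neg_log_softmax, mul_sub, sum_sub_distrib, ← sum_mul, hq, one_mul]

/-- Maximum entropy principle: the cross entropy against a softmax depends on `Q` only through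
its expected energy. -/
theorem sum_mul_entropy_le_of_energy_eq {X : Type*} [Fintype X] {μ : X → ℝ}
    (hμ : ∀ x, 0 ≤ μ x) (f : X → Y → ℝ) {Q : X → Y → ℝ} (hQ : ∀ x y, 0 ≤ Q x y)
    (hQ_sum : ∀ x, ∑ y, Q x y = 1)
    (henergy : ∑ x, μ x * ∑ y, Q x y * f x y =
      ∑ x, μ x * ∑ y, softmax (f x) y * f x y) :
    ∑ x, μ x * ∑ y, Q x y * -log (Q x y) ≤
      ∑ x, μ x * ∑ y, softmax (f x) y * -log (softmax (f x) y) := by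
  have hcross : ∀ P : X → Y → ℝ, (∀ x, ∑ y, P x y = 1) →
      ∑ x, μ x * ∑ y, P x y * -log (softmax (f x) y) =
        ∑ x, μ x * log (∑ y, exp (f x y)) - ∑ x, μ x * ∑ y, P x y * f x y := fun P hP => by
    simp only [sum_mul_neg_log_softmax _ (hP _), mul_sub, sum_sub_distrib]
  calc ∑ x, μ x * ∑ y, Q x y * -log (Q x y)
      ≤ ∑ x, μ x * ∑ y, Q x y * -log (softmax (f x) y) :=
        sum_le_sum fun x _ => mul_le_mul_of_nonneg_left
          (sum_mul_neg_log_le_sum_mul_neg_log (hQ x) (softmax_pos _)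
            (by rw [sum_softmax, hQ_sum])) (hμ x)
    _ = ∑ x, μ x * ∑ y, softmax (f x) y * -log (softmax (f x) y) := by
        rw [hcross Q hQ_sum, hcross _ fun x => sum_softmax _, henergy]

end Entropy

section Energy

variable {X Y : Type*} [Fintype X] [Fintype Y]

theorem sum_sum_sum_sum_comm {K : Type*} [Fintype K] {ι : K → Type*} [∀ k, Fintype (ι k)]
    (F : X → Y → (k : K) → ι k → ℝ) :
    ∑ x, ∑ y, ∑ k, ∑ i, F x y k i = ∑ k, ∑ i, ∑ x, ∑ y, F x y k i := by
  calc _ = ∑ x, ∑ k, ∑ y, ∑ i, F x y k i := sum_congr rfl fun _ _ => sum_comm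
    _ = ∑ k, ∑ x, ∑ i, ∑ y, F x y k i := by
      rw [sum_comm]; exact sum_congr rfl fun _ _ => sum_congr rfl fun _ _ => sum_comm
    _ = _ := sum_congr rfl fun _ _ => sum_comm

theorem sum_mul_expectation_linear_energy {K : Type*} [Fintype K] {ι : K → Type*}
    [∀ k, Fintype (ι k)] (μ : X → ℝ) (a : K → X → ℝ) (θ : (k : K) → ι k → ℝ)
    (g : (k : K) → X → Y → ι k → ℝ) (P : X → Y → ℝ) :
    ∑ x, μ x * ∑ y, P x y * ∑ k, a k x * ∑ i, θ k i * g k x y i =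
      ∑ k, ∑ i, θ k i * ∑ x, ∑ y, μ x * a k x * P x y * g k x y i := by
  simp only [mul_sum]
  rw [sum_sum_sum_sum_comm]
  ac_rfl

theorem sum_mul_expectation_multiview_energy {K K' : Type*} [Fintype K] [Fintype K']
    {ι : K → Type*} [∀ k, Fintype (ι k)] {ι' : K' → Type*} [∀ k, Fintype (ι' k)]
    (μ : X → ℝ) (a : K → X → ℝ) (b : X → ℝ) (θ : (k : K) → ι k → ℝ)
    (g : (k : K) → X → Y → ι k → ℝ) (θ' : (k : K') → ι' k → ℝ)
    (g' : (k : K') → X → Y → ι' k → ℝ) (P : X → Y → ℝ) :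
    ∑ x, μ x * ∑ y, P x y *
        ((∑ k, a k x * ∑ i, θ k i * g k x y i) + b x * ∑ k, ∑ i, θ' k i * g' k x y i) =
      (∑ k, ∑ i, θ k i * ∑ x, ∑ y, μ x * a k x * P x y * g k x y i) +
        ∑ k, ∑ i, θ' k i * ∑ x, ∑ y, μ x * b x * P x y * g' k x y i := by
  rw [← sum_mul_expectation_linear_energy, ← sum_mul_expectation_linear_energy (a := fun _ => b)]
  simp only [mul_add, sum_add_distrib, mul_sum]

end Energy

theorem robust_multiview_parametric_form_general
    {X Y Vg Vo : Type*} [Fintype X] [Fintype Y] [Fintype Vg] [Fintype Vo]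
    [Nonempty Y]
    (ptrain ptest : X → ℝ)
    (htrain_pos : ∀ x, 0 < ptrain x)
    (htest_pos : ∀ x, 0 < ptest x)
    (pcond : X → Y → ℝ)
    -- generalized views: view spaces, projections, features, parameters
    (Xg : Vg → Type*)
    (πg : (v : Vg) → X → Xg v)
    (dg : Vg → ℕ)
    (φg : (v : Vg) → Xg v → Y → Fin (dg v) → ℝ)
    (θg : (v : Vg) → Fin (dg v) → ℝ)
    -- non-generalized views: view spaces, projections, features, parameters
    (Xo : Vo → Type*)
    (πo : (v : Vo) → X → Xo v)
    (do_ : Vo → ℕ)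
    (φo : (v : Vo) → Xo v → Y → Fin (do_ v) → ℝ)
    (θo : (v : Vo) → Fin (do_ v) → ℝ)
    -- view marginals of the training and testing input distributions
    (mtrain mtest : (v : Vg) → X → ℝ)
    -- the ratio r_v(x) = p_test(x_{-v}|x_v)/p_train(x_{-v}|x_v)
    (r : Vg → X → ℝ)
    (hr : ∀ v x, r v x = (ptest x / ptrain x) * (mtrain v x / mtest v x))
    -- the parametric-form predictor
    (Phat : X → Y → ℝ)
    (hPhat : ∀ x y, Phat x y =
      Real.exp ((∑ v, (mtrain v x / mtest v x) * ∑ i, θg v i * φg v (πg v x) y i) +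
          (ptrain x / ptest x) * ∑ v', ∑ i, θo v' i * φo v' (πo v' x) y i) /
        ∑ y', Real.exp
          ((∑ v, (mtrain v x / mtest v x) * ∑ i, θg v i * φg v (πg v x) y' i) +
            (ptrain x / ptest x) * ∑ v', ∑ i, θo v' i * φo v' (πo v' x) y' i))
    -- P̂ satisfies the generalized-view constraints
    (hPhat_g : ∀ (v : Vg) (i : Fin (dg v)),
      ∑ x, ∑ y, ptrain x * r v x * Phat x y * φg v (πg v x) y i =
        ∑ x, ∑ y, ptrain x * pcond x y * r v x * φg v (πg v x) y i)
    -- P̂ satisfies the non-generalized-view constraints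
    (hPhat_o : ∀ (v' : Vo) (i : Fin (do_ v')),
      ∑ x, ∑ y, ptrain x * Phat x y * φo v' (πo v' x) y i =
        ∑ x, ∑ y, ptrain x * pcond x y * φo v' (πo v' x) y i)
    -- an arbitrary conditional label distribution satisfying the same constraints
    (Q : X → Y → ℝ)
    (hQ_nonneg : ∀ x y, 0 ≤ Q x y) (hQ_sum : ∀ x, ∑ y, Q x y = 1)
    (hQ_g : ∀ (v : Vg) (i : Fin (dg v)),
      ∑ x, ∑ y, ptrain x * r v x * Q x y * φg v (πg v x) y i =
        ∑ x, ∑ y, ptrain x * pcond x y * r v x * φg v (πg v x) y i)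
    (hQ_o : ∀ (v' : Vo) (i : Fin (do_ v')),
      ∑ x, ∑ y, ptrain x * Q x y * φo v' (πo v' x) y i =
        ∑ x, ∑ y, ptrain x * pcond x y * φo v' (πo v' x) y i) :
    ∑ x, ptest x * ∑ y, Q x y * (-Real.log (Q x y)) ≤
      ∑ x, ptest x * ∑ y, Phat x y * (-Real.log (Phat x y)) := by
  set f : X → Y → ℝ := fun x y =>
    (∑ v, (mtrain v x / mtest v x) * ∑ i, θg v i * φg v (πg v x) y i) +
      (ptrain x / ptest x) * ∑ v', ∑ i, θo v' i * φo v' (πo v' x) y i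
  obtain rfl : Phat = fun x => softmax (f x) := funext fun x => funext (hPhat x)
  have hweight_g : ∀ v x, ptest x * (mtrain v x / mtest v x) = ptrain x * r v x := fun v x => by
    rw [hr]; field_simp [(htrain_pos x).ne']
  have hweight_o : ∀ x, ptest x * (ptrain x / ptest x) = ptrain x := fun x =>
    mul_div_cancel₀ _ (htest_pos x).ne'
  refine sum_mul_entropy_le_of_energy_eq (fun x => (htest_pos x).le) f hQ_nonneg hQ_sum ?_
  simp only [f, sum_mul_expectation_multiview_energy, hweight_g, hweight_o, hQ_g, hQ_o,
    hPhat_g, hPhat_o]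

/-- Theorem 2 of the paper: the robust multiview covariate shift
classifier under logloss has the parametric form
`P̂_θ(y|x) ∝ exp(∑_{v∈V_g} (p_train(x_v)/p_test(x_v)) θ_v·φ_v(x_v,y)
              + (p_train(x)/p_test(x)) ∑_{v'∈V_o} θ_{v'}·φ_{v'}(x_{v'},y))`:
any conditional label distribution `Q` satisfying the same (reweighted and
plain) moment-matching constraints has expected testing conditional entropy at
most that of `P̂_θ`. The disjoint sets of views `V_g` (generalized) and `V_o`
(non-generalized) are modeled as two separate index types `Vg` and `Vo`. -/
theorem robust_multiview_parametric_form
    {X Y Vg Vo : Type*} [Fintype X] [Fintype Y] [Fintype Vg] [Fintype Vo]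
    [Nonempty X] [Nonempty Y]
    (ptrain ptest : X → ℝ)
    (htrain_pos : ∀ x, 0 < ptrain x) (htrain_sum : ∑ x, ptrain x = 1)
    (htest_pos : ∀ x, 0 < ptest x) (htest_sum : ∑ x, ptest x = 1)
    (pcond : X → Y → ℝ)
    (hcond_nonneg : ∀ x y, 0 ≤ pcond x y) (hcond_sum : ∀ x, ∑ y, pcond x y = 1)
    -- generalized views: view spaces, projections, features, parameters
    (Xg : Vg → Type*) [∀ v, Fintype (Xg v)] [∀ v, DecidableEq (Xg v)]
    (πg : (v : Vg) → X → Xg v)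
    (dg : Vg → ℕ)
    (φg : (v : Vg) → Xg v → Y → Fin (dg v) → ℝ)
    (θg : (v : Vg) → Fin (dg v) → ℝ)
    -- non-generalized views: view spaces, projections, features, parameters
    (Xo : Vo → Type*) [∀ v, Fintype (Xo v)] [∀ v, DecidableEq (Xo v)]
    (πo : (v : Vo) → X → Xo v)
    (do_ : Vo → ℕ)
    (φo : (v : Vo) → Xo v → Y → Fin (do_ v) → ℝ)
    (θo : (v : Vo) → Fin (do_ v) → ℝ)
    -- view marginals of the training and testing input distributions
    (mtrain mtest : (v : Vg) → X → ℝ)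
    (hmtrain : ∀ v x, mtrain v x =
      ∑ x' ∈ Finset.univ.filter (fun x' => πg v x' = πg v x), ptrain x')
    (hmtest : ∀ v x, mtest v x =
      ∑ x' ∈ Finset.univ.filter (fun x' => πg v x' = πg v x), ptest x')
    (hmtrain_pos : ∀ v x, 0 < mtrain v x) (hmtest_pos : ∀ v x, 0 < mtest v x)
    -- the ratio r_v(x) = p_test(x_{-v}|x_v)/p_train(x_{-v}|x_v)
    (r : Vg → X → ℝ)
    (hr : ∀ v x, r v x = (ptest x / ptrain x) * (mtrain v x / mtest v x))
    -- the parametric-form predictor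
    (Phat : X → Y → ℝ)
    (hPhat : ∀ x y, Phat x y =
      Real.exp ((∑ v, (mtrain v x / mtest v x) * ∑ i, θg v i * φg v (πg v x) y i) +
          (ptrain x / ptest x) * ∑ v', ∑ i, θo v' i * φo v' (πo v' x) y i) /
        ∑ y', Real.exp
          ((∑ v, (mtrain v x / mtest v x) * ∑ i, θg v i * φg v (πg v x) y' i) +
            (ptrain x / ptest x) * ∑ v', ∑ i, θo v' i * φo v' (πo v' x) y' i))
    -- P̂ satisfies the generalized-view constraints
    (hPhat_g : ∀ (v : Vg) (i : Fin (dg v)),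
      ∑ x, ∑ y, ptrain x * r v x * Phat x y * φg v (πg v x) y i =
        ∑ x, ∑ y, ptrain x * pcond x y * r v x * φg v (πg v x) y i)
    -- P̂ satisfies the non-generalized-view constraints
    (hPhat_o : ∀ (v' : Vo) (i : Fin (do_ v')),
      ∑ x, ∑ y, ptrain x * Phat x y * φo v' (πo v' x) y i =
        ∑ x, ∑ y, ptrain x * pcond x y * φo v' (πo v' x) y i)
    -- an arbitrary conditional label distribution satisfying the same constraints
    (Q : X → Y → ℝ)
    (hQ_nonneg : ∀ x y, 0 ≤ Q x y) (hQ_sum : ∀ x, ∑ y, Q x y = 1)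
    (hQ_g : ∀ (v : Vg) (i : Fin (dg v)),
      ∑ x, ∑ y, ptrain x * r v x * Q x y * φg v (πg v x) y i =
        ∑ x, ∑ y, ptrain x * pcond x y * r v x * φg v (πg v x) y i)
    (hQ_o : ∀ (v' : Vo) (i : Fin (do_ v')),
      ∑ x, ∑ y, ptrain x * Q x y * φo v' (πo v' x) y i =
        ∑ x, ∑ y, ptrain x * pcond x y * φo v' (πo v' x) y i) :
    ∑ x, ptest x * ∑ y, Q x y * (-Real.log (Q x y)) ≤
      ∑ x, ptest x * ∑ y, Phat x y * (-Real.log (Phat x y)) :=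
  robust_multiview_parametric_form_general ptrain ptest htrain_pos htest_pos pcond Xg πg dg φg θg Xo
    πo do_ φo θo mtrain mtest r hr Phat hPhat hPhat_g hPhat_o Q hQ_nonneg hQ_sum hQ_g hQ_o
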